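/- arXiv:2601.17092 — 4 statements merged into one kernel-verified Lean document; each statement's English description precedes it below -/
import Mathlib

section
/- For every natural number n ≥ 0, the sum ∑_{k=0}^{n} C(n,k) · 4^k · (-1)^k · (k!)² / (2k+1)! equals 1/(2n+1). -/
/-!
Each summand is `C(n,k) (-4)^k ∫₀¹ xᵏ(1-x)ᵏ dx` by the Beta integral, and
`∑ₖ C(n,k) (-4x(1-x))ᵏ = (1 - 4x(1-x))ⁿ = (2x-1)²ⁿ`, whose integral over `[0,1]` is `1/(2n+1)`.
-/

open intervalIntegral

theorem integral_pow_mul_one_sub_pow_succ (a b : ℕ) :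
    (a + 1 : ℝ) * ∫ x in (0 : ℝ)..1, x ^ a * (1 - x) ^ (b + 1)
      = (b + 1 : ℝ) * ∫ x in (0 : ℝ)..1, x ^ (a + 1) * (1 - x) ^ b := by
  have hu : ∀ x ∈ Set.uIcc (0 : ℝ) 1,
      HasDerivAt (fun x : ℝ ↦ (1 - x) ^ (b + 1)) (-((b + 1 : ℝ) * (1 - x) ^ b)) x := by
    intro x _
    simpa using ((hasDerivAt_id x).const_sub 1).fun_pow (b + 1)
  have hv : ∀ x ∈ Set.uIcc (0 : ℝ) 1,
      HasDerivAt (fun x : ℝ ↦ x ^ (a + 1)) ((a + 1 : ℝ) * x ^ a) x := by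
    intro x _
    simpa using hasDerivAt_pow (a + 1) x
  have hparts := integral_mul_deriv_eq_deriv_mul hu hv
    (by apply Continuous.intervalIntegrable; fun_prop)
    (by apply Continuous.intervalIntegrable; fun_prop)
  simp only [sub_self, zero_pow (Nat.succ_ne_zero _), zero_mul, mul_zero, sub_zero,
    neg_mul, integral_neg, sub_neg_eq_add, zero_add] at hparts
  rw [← integral_const_mul, ← integral_const_mul]
  convert hparts using 2 <;> ext x <;> ring

theorem integral_pow_mul_one_sub_pow (a b : ℕ) :
    ∫ x in (0 : ℝ)..1, x ^ a * (1 - x) ^ b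
      = (a.factorial * b.factorial : ℝ) / (a + b + 1).factorial := by
  induction b generalizing a with
  | zero => simp [integral_pow, Nat.factorial_succ, field]
  | succ b ih =>
    have h := integral_pow_mul_one_sub_pow_succ a b
    rw [ih, show a + 1 + b + 1 = a + (b + 1) + 1 by omega, Nat.factorial_succ a] at h
    rw [Nat.factorial_succ b]
    push_cast at h ⊢
    field_simp at h ⊢
    linarith

theorem two_mul_sub_one_pow_two_mul (x : ℝ) (n : ℕ) :
    (2 * x - 1) ^ (2 * n)
      = ∑ k ∈ Finset.range (n + 1), (n.choose k : ℝ) * (-4) ^ k * (x ^ k * (1 - x) ^ k) := by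
  rw [pow_mul, show (2 * x - 1) ^ 2 = -4 * (x * (1 - x)) + 1 by ring, add_pow]
  refine Finset.sum_congr rfl fun k _ ↦ ?_
  rw [one_pow, mul_one, mul_pow, mul_pow]
  ring

theorem integral_two_mul_sub_one_pow_two_mul (n : ℕ) :
    ∫ x in (0 : ℝ)..1, (2 * x - 1) ^ (2 * n) = 1 / (2 * n + 1) := by
  rw [integral_comp_mul_sub (fun y : ℝ ↦ y ^ (2 * n)) two_ne_zero 1, integral_pow]
  norm_num [Odd.neg_one_pow (odd_two_mul_add_one n)]
  field_simp

theorem stmt_0 (n : ℕ) :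
    ∑ k ∈ Finset.range (n + 1),
      (n.choose k : ℚ) * 4 ^ k * (-1) ^ k * (k.factorial : ℚ) ^ 2 / ((2 * k + 1).factorial : ℚ)
    = (1 : ℚ) / (2 * (n : ℚ) + 1) := by
  apply Rat.cast_injective (α := ℝ)
  push_cast
  calc _ = ∑ k ∈ Finset.range (n + 1),
          ∫ x in (0 : ℝ)..1, (n.choose k : ℝ) * (-4) ^ k * (x ^ k * (1 - x) ^ k) := by
        refine Finset.sum_congr rfl fun k _ ↦ ?_
        rw [integral_const_mul, integral_pow_mul_one_sub_pow, ← two_mul, neg_pow (4 : ℝ)]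
        ring
    _ = ∫ x in (0 : ℝ)..1, (2 * x - 1) ^ (2 * n) := by
        rw [← integral_finsetSum fun k _ ↦ by apply Continuous.intervalIntegrable; fun_prop]
        simp_rw [two_mul_sub_one_pow_two_mul]
    _ = 1 / (2 * n + 1) := integral_two_mul_sub_one_pow_two_mul n
end

section
/- For all natural numbers n ≥ 1 and integers j with 0 ≤ j ≤ n: the sum ∑_{k=0}^{n} (-1)^k C(2n+1, k) (2n+1-2k)^{2j+1} equals 0 if 0 ≤ j ≤ n-1, and equals 4^n (2n+1)! if j = n. -/
/-!
With `m = 2n + 1`, the summand is invariant under `k ↦ m - k` (both `m` and the exponent are odd),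
so the sum is half of the full alternating sum over `0 ≤ k ≤ m`. That full sum is `(-1)^m` times
the `m`-th forward difference at `0` of the polynomial `(m - 2x)^(2j+1)`, whose degree is at most
`m`; it therefore vanishes unless `2j + 1 = m`, in which case it equals `2^m m!`.
-/

open Finset Polynomial

section AlternatingChooseSum

variable {R : Type*} [CommRing R]

theorem sum_range_neg_one_pow_mul_choose_mul (f : R → R) (m : ℕ) :
    ∑ k ∈ range (m + 1), (-1 : R) ^ k * m.choose k * f k = (-1) ^ m * (fwdDiff 1)^[m] f 0 := by
  rw [fwdDiff_iter_eq_sum_shift, mul_sum]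
  refine sum_congr rfl fun k hk => ?_
  obtain ⟨d, rfl⟩ := Nat.exists_eq_add_of_le (Nat.lt_succ_iff.mp (mem_range.mp hk))
  rw [zsmul_eq_mul, zero_add, nsmul_one, Nat.add_sub_cancel_left]
  push_cast
  have hsq : ((-1 : R) ^ d) ^ 2 = 1 := by rw [← pow_mul, pow_mul', neg_one_sq, one_pow]
  linear_combination (-(-1) ^ k * ((k + d).choose k : R) * f k) * hsq

theorem Polynomial.fwdDiff_iter_eval_of_natDegree_le {P : R[X]} {m : ℕ} (hP : P.natDegree ≤ m)
    (x : R) : (fwdDiff 1)^[m] P.eval x = P.coeff m * m.factorial := by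
  rcases hP.lt_or_eq with hlt | rfl
  · rw [fwdDiff_iter_eq_zero_of_degree_lt hlt, coeff_eq_zero_of_natDegree_lt hlt, zero_mul]
    rfl
  · rw [fwdDiff_iter_degree_eq_factorial, coeff_natDegree]
    rfl

theorem Polynomial.sum_range_neg_one_pow_mul_choose_mul_eval {P : R[X]} {m : ℕ}
    (hP : P.natDegree ≤ m) :
    ∑ k ∈ range (m + 1), (-1 : R) ^ k * m.choose k * P.eval (k : R)
      = (-1) ^ m * P.coeff m * m.factorial := by
  rw [sum_range_neg_one_pow_mul_choose_mul P.eval, fwdDiff_iter_eval_of_natDegree_le hP, mul_assoc]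

theorem sum_range_neg_one_pow_mul_choose_mul_sub_mul_pow (a b : R) {p m : ℕ} (hpm : p ≤ m) :
    ∑ k ∈ range (m + 1), (-1 : R) ^ k * m.choose k * (b - a * k) ^ p
      = if p = m then a ^ m * m.factorial else 0 := by
  have hlin : (C (-a) * X + C b).natDegree ≤ 1 := natDegree_linear_le
  have hdeg : ((C (-a) * X + C b) ^ p).natDegree ≤ m :=
    (natDegree_pow_le_of_le p hlin).trans (by omega)
  have hsum := sum_range_neg_one_pow_mul_choose_mul_eval hdeg
  simp only [eval_pow, eval_add, eval_mul, eval_C, eval_X, neg_mul, neg_add_eq_sub] at hsum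
  rw [hsum, coeff_pow_eq_ite_of_natDegree_le_of_le hlin (by omega), mul_one]
  split_ifs with h₁ h₂ h₂
  · subst h₁
    simp only [coeff_add, coeff_C_mul_X, coeff_C, if_true, if_false, add_zero, one_ne_zero]
    rw [← mul_pow, neg_one_mul, neg_neg]
  · omega
  · omega
  · rw [mul_zero, zero_mul]

theorem neg_one_pow_mul_choose_mul_sub_two_mul_pow_reflect {m p k : ℕ} (hm : Odd m) (hp : Odd p) (hk : k ≤ m) :
    (-1 : R) ^ (m - k) * m.choose (m - k) * ((m : R) - 2 * (m - k : ℕ)) ^ p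
      = (-1) ^ k * m.choose k * ((m : R) - 2 * k) ^ p := by
  have hsign : (-1 : R) ^ (m - k) = -(-1) ^ k := by
    have hprod : (-1 : R) ^ (m - k) * (-1) ^ k = -1 := by
      rw [← pow_add, Nat.sub_add_cancel hk, hm.neg_one_pow]
    have hsq : ((-1 : R) ^ k) ^ 2 = 1 := by rw [← pow_mul, pow_mul', neg_one_sq, one_pow]
    linear_combination (-(-1 : R) ^ (m - k)) * hsq + (-1 : R) ^ k * hprod
  rw [Nat.choose_symm hk, Nat.cast_sub hk, hsign,
    show (m : R) - 2 * (m - k) = -((m : R) - 2 * k) by ring, hp.neg_pow]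
  ring

end AlternatingChooseSum

theorem sum_range_two_mul_add_two_of_symm {M : Type*} [AddCommMonoid M] (f : ℕ → M) (n : ℕ)
    (hf : ∀ k ≤ n, f (2 * n + 1 - k) = f k) :
    ∑ k ∈ range (2 * n + 2), f k = 2 • ∑ k ∈ range (n + 1), f k := by
  rw [show 2 * n + 2 = (n + 1) + (n + 1) by ring, sum_range_add, two_nsmul, ← sum_range_reflect]
  congr 1
  refine sum_congr rfl fun k hk => ?_
  have hk : k < n + 1 := mem_range.mp hk
  rw [Nat.add_sub_cancel, ← hf (n - k) (by omega)]
  congr 1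
  omega

theorem stmt_4_general (n j : ℕ) (hj : j ≤ n) :
    ∑ k ∈ Finset.range (n + 1),
      (-1 : ℤ) ^ k * ((2 * n + 1).choose k : ℤ) * ((2 * n + 1 : ℤ) - 2 * k) ^ (2 * j + 1)
    = if j = n then 4 ^ n * ((2 * n + 1).factorial : ℤ) else 0 := by
  have hfull := sum_range_neg_one_pow_mul_choose_mul_sub_mul_pow (2 : ℤ) (2 * n + 1)
    (show 2 * j + 1 ≤ 2 * n + 1 by omega)
  rw [sum_range_two_mul_add_two_of_symm _ n fun k hk => by
    simpa using neg_one_pow_mul_choose_mul_sub_two_mul_pow_reflect (R := ℤ) (odd_two_mul_add_one n)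
      (odd_two_mul_add_one j) (show k ≤ 2 * n + 1 by omega), two_nsmul] at hfull
  by_cases hjn : j = n
  · have hpow : (2 : ℤ) ^ (2 * n + 1) = 2 * 4 ^ n := by rw [pow_succ, pow_mul]; norm_num; ring
    rw [if_pos (by omega), hpow] at hfull
    rw [if_pos hjn]
    linarith
  · rw [if_neg (by omega)] at hfull
    rw [if_neg hjn]
    linarith

theorem stmt_4 (n j : ℕ) (hn : 1 ≤ n) (hj : j ≤ n) :
    ∑ k ∈ Finset.range (n + 1),
      (-1 : ℤ) ^ k * ((2 * n + 1).choose k : ℤ) * ((2 * n + 1 : ℤ) - 2 * k) ^ (2 * j + 1)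
    = if j = n then 4 ^ n * ((2 * n + 1).factorial : ℤ) else 0 :=
  stmt_4_general n j hj
end

section
/- For all natural numbers q, n with 0 ≤ q < n, the sum ∑_{m=0}^{n} (c_{2n-2m,n} / (2m)!) · Ω_{q,m} equals 0. -/
/-! The sum is `1 / (2n)!` times the `2n`-th derivative at `0` of
`cosh^(2q+1) x · (x / sinh x)^(2n+1)`, because `Ω q m` is the `2m`-th derivative of `cosh^(2q+1)`
at `0` (expand `cosh` into exponentials and pair `k` with `2q+1-k`) and the odd ones vanish.
Writing `cosh^(2q+1) = cosh · (1 + sinh²)^q` and `x = (x / sinh x) · sinh x`, that product is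
`∑ⱼ C(q,j) x^(2j) · cosh x · (x / sinh x)^(2(n-j)+1)`. For `r ≥ 1` the function
`cosh x · (x / sinh x)^(r+1)` equals `ψ - x ψ' / r` with `ψ = (x / sinh x)^r`, so its `r`-th
derivative at `0` is `ψ⁽ʳ⁾(0) - ψ⁽ʳ⁾(0) = 0`; with `r = 2(n-j) ≥ 2` every summand drops out. -/

/-- `c k n` : the coefficient of `x^k` in the Taylor expansion of `x^(2n+1)/sinh^(2n+1) x`
around `0` (the function being extended by its limit `1` at `0`). -/
noncomputable def taylorC (k n : ℕ) : ℝ :=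
  iteratedDeriv k
    (fun x : ℝ => if x = 0 then 1 else x ^ (2 * n + 1) / Real.sinh x ^ (2 * n + 1)) 0
    / k.factorial

/-- `Ω q p := 4⁻ᑫ ∑_{k=0}^{q} C(2q+1,k) (2q+1-2k)^(2p)`. -/
noncomputable def Omega (q p : ℕ) : ℝ :=
  (1 / 4 ^ q) * ∑ k ∈ Finset.range (q + 1),
    ((2 * q + 1).choose k : ℝ) * ((2 * q + 1 : ℝ) - 2 * k) ^ (2 * p)

open Real Finset Topology
open scoped Nat

theorem Finset.sum_range_two_mul_add_one_eq_sum_even {M : Type*} [AddCommMonoid M] {f : ℕ → M}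
    (hf : ∀ k, f (2 * k + 1) = 0) (n : ℕ) :
    ∑ i ∈ range (2 * n + 1), f i = ∑ m ∈ range (n + 1), f (2 * m) := by
  induction n with
  | zero => simp
  | succ n ih =>
    rw [sum_range_succ _ (n + 1), ← ih, show 2 * (n + 1) + 1 = 2 * n + 1 + 1 + 1 by ring,
      sum_range_succ, sum_range_succ, hf, add_zero, mul_add_one]

theorem Finset.sum_range_two_mul_add_two_eq_sum_add_reflect {M : Type*} [AddCommMonoid M]
    (f : ℕ → M) (q : ℕ) :
    ∑ k ∈ range (2 * q + 2), f k = ∑ k ∈ range (q + 1), (f k + f (2 * q + 1 - k)) := by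
  rw [show 2 * q + 2 = (q + 1) + (q + 1) by ring, sum_range_add,
    ← sum_range_reflect (fun k => f (q + 1 + k)), ← sum_add_distrib]
  refine sum_congr rfl fun k hk => ?_
  have := mem_range.mp hk
  congr 2
  omega

section IteratedDeriv

variable {𝕜 : Type*} [NontriviallyNormedField 𝕜]

theorem iteratedDeriv_odd_eq_zero_of_even {F : Type*} [NormedAddCommGroup F] [NormedSpace 𝕜 F]
    [IsAddTorsionFree F] {f : 𝕜 → F} (hf : Function.Even f) (k : ℕ) :
    iteratedDeriv (2 * k + 1) f 0 = 0 := by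
  have h := iteratedDeriv_comp_neg (2 * k + 1) f 0
  simp only [hf.eq, neg_zero] at h
  rw [pow_succ, pow_mul, neg_one_sq, one_pow, one_mul, neg_one_smul] at h
  exact self_eq_neg.mp h

theorem iteratedDeriv_fun_pow_mul_zero {g : 𝕜 → 𝕜} {k : ℕ} (hg : ContDiffAt 𝕜 k g 0) (j : ℕ) :
    iteratedDeriv k (fun x => x ^ j * g x) 0 = k.descFactorial j * iteratedDeriv (k - j) g 0 := by
  rw [iteratedDeriv_fun_mul (by fun_prop) hg]
  simp only [iteratedDeriv_fun_pow_zero, Nat.cast_ite, Nat.cast_zero, mul_ite, mul_zero, ite_mul,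
    zero_mul]
  rw [sum_ite_eq', Nat.descFactorial_eq_factorial_mul_choose]
  split_ifs with hj
  · push_cast; ring
  · rw [Nat.choose_eq_zero_of_lt (by simpa using hj)]; simp

theorem iteratedDeriv_id_mul_deriv_zero {f : 𝕜 → 𝕜} {k : ℕ} (hf : ContDiffAt 𝕜 k (deriv f) 0) :
    iteratedDeriv k (fun x => x * deriv f x) 0 = k * iteratedDeriv k f 0 := by
  have h := iteratedDeriv_fun_pow_mul_zero hf 1
  simp only [pow_one, Nat.descFactorial_one] at h
  rw [h]
  cases k with
  | zero => simp
  | succ k => simp [iteratedDeriv_succ']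

theorem iteratedDeriv_fun_mul_div_factorial [CharZero 𝕜] {f g : 𝕜 → 𝕜} {x : 𝕜} {k : ℕ}
    (hf : ContDiffAt 𝕜 k f x) (hg : ContDiffAt 𝕜 k g x) :
    iteratedDeriv k (fun y => f y * g y) x / k ! =
      ∑ i ∈ range (k + 1), iteratedDeriv i f x / i ! * (iteratedDeriv (k - i) g x / (k - i)!) := by
  rw [iteratedDeriv_fun_mul hf hg, sum_div]
  refine sum_congr rfl fun i hi => ?_
  have hik := Nat.lt_succ_iff.mp (mem_range.mp hi)
  have hchoose : (k.choose i : 𝕜) ≠ 0 := Nat.cast_ne_zero.mpr (Nat.choose_pos hik).ne'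
  rw [← Nat.choose_mul_factorial_mul_factorial hik]
  push_cast
  field_simp

end IteratedDeriv

theorem cosh_pow_eq_sum_exp (N : ℕ) (x : ℝ) :
    cosh x ^ N = (2 ^ N)⁻¹ * ∑ k ∈ range (N + 1), (N.choose k : ℝ) * exp ((N - 2 * k) * x) := by
  rw [cosh_eq, div_pow, add_comm, add_pow, div_eq_inv_mul]
  congr 1
  refine sum_congr rfl fun k hk => ?_
  rw [← exp_nat_mul, ← exp_nat_mul, ← exp_add, Nat.cast_sub (Nat.lt_succ_iff.mp (mem_range.mp hk))]
  ring_nf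

theorem iteratedDeriv_cosh_pow_zero (N j : ℕ) :
    iteratedDeriv j (fun x => cosh x ^ N) 0 =
      (2 ^ N)⁻¹ * ∑ k ∈ range (N + 1), (N.choose k : ℝ) * ((N : ℝ) - 2 * k) ^ j := by
  simp_rw [cosh_pow_eq_sum_exp N]
  rw [iteratedDeriv_const_mul_field, iteratedDeriv_fun_sum (fun k _ => by fun_prop)]
  simp [iteratedDeriv_const_mul_field, iteratedDeriv_exp_const_mul]

theorem iteratedDeriv_cosh_pow_two_mul_add_one_zero (q m : ℕ) :
    iteratedDeriv (2 * m) (fun x => cosh x ^ (2 * q + 1)) 0 = Omega q m := by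
  rw [iteratedDeriv_cosh_pow_zero, sum_range_two_mul_add_two_eq_sum_add_reflect, Omega]
  have hsymm : ∀ k ∈ range (q + 1), ((2 * q + 1).choose (2 * q + 1 - k) : ℝ) *
      (((2 * q + 1 : ℕ) : ℝ) - 2 * (2 * q + 1 - k : ℕ)) ^ (2 * m) =
      ((2 * q + 1).choose k : ℝ) * ((2 * q + 1 : ℝ) - 2 * k) ^ (2 * m) := by
    intro k hk
    have hk : k ≤ 2 * q + 1 := by have := mem_range.mp hk; omega
    rw [Nat.choose_symm hk, Nat.cast_sub hk, pow_mul, pow_mul]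
    push_cast
    ring
  rw [sum_congr rfl fun k hk => congrArg₂ (· + ·) rfl (hsymm k hk)]
  push_cast
  simp_rw [← two_mul]
  rw [← mul_sum, pow_succ, pow_mul]
  field_simp
  norm_num
  ring

/-- `x / sinh x`, written as the inverse of the divided difference of `sinh` at `0` so that its
value `1` at `0` and its analyticity come for free. -/
noncomputable def xDivSinh (x : ℝ) : ℝ := (dslope sinh 0 x)⁻¹

theorem xDivSinh_zero : xDivSinh 0 = 1 := by
  simp [xDivSinh, dslope_same, Real.deriv_sinh]

theorem xDivSinh_of_ne_zero {x : ℝ} (hx : x ≠ 0) : xDivSinh x = x / sinh x := by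
  simp [xDivSinh, dslope_of_ne _ hx, slope_def_field]

theorem xDivSinh_mul_sinh (x : ℝ) : xDivSinh x * sinh x = x := by
  rcases eq_or_ne x 0 with rfl | hx
  · simp
  · rw [xDivSinh_of_ne_zero hx, div_mul_cancel₀ _ (sinh_ne_zero.mpr hx)]

theorem xDivSinh_eventuallyEq {x : ℝ} (hx : x ≠ 0) : xDivSinh =ᶠ[𝓝 x] fun y => y / sinh y := by
  filter_upwards [eventually_ne_nhds hx] with y hy using xDivSinh_of_ne_zero hy

theorem analyticAt_xDivSinh (x : ℝ) : AnalyticAt ℝ xDivSinh x := by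
  rcases eq_or_ne x 0 with rfl | hx
  · obtain ⟨p, hp⟩ := (analyticAt_sinh (x := 0))
    exact AnalyticAt.inv ⟨_, hp.has_fpower_series_dslope_fslope⟩
      (by simp [dslope_same, Real.deriv_sinh])
  · exact (analyticAt_id.div analyticAt_sinh (sinh_ne_zero.mpr hx)).congr
      (xDivSinh_eventuallyEq hx).symm

@[fun_prop]
theorem contDiff_xDivSinh {n : WithTop ℕ∞} : ContDiff ℝ n xDivSinh :=
  contDiff_iff_contDiffAt.mpr fun x => (analyticAt_xDivSinh x).contDiffAt

theorem id_mul_deriv_xDivSinh (x : ℝ) :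
    x * deriv xDivSinh x = xDivSinh x - xDivSinh x ^ 2 * cosh x := by
  rcases eq_or_ne x 0 with rfl | hx
  · simp [xDivSinh_zero]
  · have hs : sinh x ≠ 0 := sinh_ne_zero.mpr hx
    have hderiv : HasDerivAt (fun y => y / sinh y) ((1 * sinh x - x * cosh x) / sinh x ^ 2) x :=
      (hasDerivAt_id' x).div (hasDerivAt_sinh x) hs
    rw [(xDivSinh_eventuallyEq hx).deriv_eq, hderiv.deriv, xDivSinh_of_ne_zero hx]
    field_simp

theorem cosh_mul_xDivSinh_pow (r : ℕ) (x : ℝ) :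
    cosh x * xDivSinh x ^ (r + 2) =
      xDivSinh x ^ (r + 1) -
        ((r + 1 : ℕ) : ℝ)⁻¹ * (x * deriv (fun y => xDivSinh y ^ (r + 1)) x) := by
  rw [deriv_fun_pow (analyticAt_xDivSinh x).differentiableAt,
    show x * (((r + 1 : ℕ) : ℝ) * xDivSinh x ^ (r + 1 - 1) * deriv xDivSinh x) =
      ((r + 1 : ℕ) : ℝ) * (xDivSinh x ^ r * (x * deriv xDivSinh x)) by simp; ring,
    ← mul_assoc, inv_mul_cancel₀ (by positivity), one_mul, id_mul_deriv_xDivSinh]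
  ring

theorem iteratedDeriv_cosh_mul_xDivSinh_pow_zero {r : ℕ} (hr : r ≠ 0) :
    iteratedDeriv r (fun x => cosh x * xDivSinh x ^ (r + 1)) 0 = 0 := by
  obtain ⟨r, rfl⟩ := Nat.exists_eq_succ_of_ne_zero hr
  have hψ : AnalyticAt ℝ (fun x => xDivSinh x ^ (r + 1)) 0 := (analyticAt_xDivSinh 0).pow _
  simp_rw [cosh_mul_xDivSinh_pow]
  rw [iteratedDeriv_fun_sub (by fun_prop) (by fun_prop), iteratedDeriv_const_mul_field,
    iteratedDeriv_id_mul_deriv_zero hψ.deriv.contDiffAt, ← mul_assoc,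
    inv_mul_cancel₀ (by positivity), one_mul, sub_self]

theorem cosh_pow_mul_xDivSinh_pow {q n : ℕ} (hqn : q ≤ n) (x : ℝ) :
    cosh x ^ (2 * q + 1) * xDivSinh x ^ (2 * n + 1) =
      ∑ j ∈ range (q + 1),
        (q.choose j : ℝ) * (x ^ (2 * j) * (cosh x * xDivSinh x ^ (2 * (n - j) + 1))) := by
  rw [pow_succ, pow_mul, cosh_sq, add_pow, mul_assoc, sum_mul]
  refine sum_congr rfl fun j hj => ?_
  have hjn : 2 * n + 1 = 2 * j + (2 * (n - j) + 1) := by have := mem_range.mp hj; omega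
  have hx : x ^ (2 * j) = xDivSinh x ^ (2 * j) * (sinh x ^ 2) ^ j := by
    rw [← pow_mul, ← mul_pow, xDivSinh_mul_sinh]
  rw [hjn, pow_add, hx]
  ring

theorem iteratedDeriv_cosh_pow_mul_xDivSinh_pow_zero {q n : ℕ} (hqn : q < n) :
    iteratedDeriv (2 * n) (fun x => cosh x ^ (2 * q + 1) * xDivSinh x ^ (2 * n + 1)) 0 = 0 := by
  simp_rw [cosh_pow_mul_xDivSinh_pow hqn.le]
  rw [iteratedDeriv_fun_sum (fun j _ => by fun_prop)]
  refine sum_eq_zero fun j hj => ?_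
  have hjn : j < n := by have := mem_range.mp hj; omega
  rw [iteratedDeriv_const_mul_field, iteratedDeriv_fun_pow_mul_zero (by fun_prop),
    show 2 * n - 2 * j = 2 * (n - j) by omega,
    iteratedDeriv_cosh_mul_xDivSinh_pow_zero (by omega), mul_zero, mul_zero]

theorem taylorC_eq_iteratedDeriv_xDivSinh_pow (k n : ℕ) :
    taylorC k n = iteratedDeriv k (fun x => xDivSinh x ^ (2 * n + 1)) 0 / k ! := by
  rw [taylorC]
  congr 2
  funext x
  rcases eq_or_ne x 0 with rfl | hx
  · simp [xDivSinh_zero]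
  · rw [if_neg hx, xDivSinh_of_ne_zero hx, div_pow]

theorem stmt_7 (q n : ℕ) (hqn : q < n) :
    ∑ m ∈ Finset.range (n + 1),
      taylorC (2 * n - 2 * m) n / ((2 * m).factorial : ℝ) * Omega q m = 0 := by
  set H : ℝ → ℝ := fun x => cosh x ^ (2 * q + 1)
  set U : ℝ → ℝ := fun x => xDivSinh x ^ (2 * n + 1)
  have hH_odd (k : ℕ) : iteratedDeriv (2 * k + 1) H 0 = 0 :=
    iteratedDeriv_odd_eq_zero_of_even (fun x => by simp only [H, cosh_neg]) k
  calc ∑ m ∈ range (n + 1), taylorC (2 * n - 2 * m) n / ((2 * m)! : ℝ) * Omega q m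
      = ∑ m ∈ range (n + 1), iteratedDeriv (2 * m) H 0 / (2 * m)! *
          (iteratedDeriv (2 * n - 2 * m) U 0 / (2 * n - 2 * m)!) := by
        refine sum_congr rfl fun m _ => ?_
        rw [taylorC_eq_iteratedDeriv_xDivSinh_pow, iteratedDeriv_cosh_pow_two_mul_add_one_zero]
        ring
    _ = ∑ i ∈ range (2 * n + 1), iteratedDeriv i H 0 / i ! *
          (iteratedDeriv (2 * n - i) U 0 / (2 * n - i)!) :=
        (sum_range_two_mul_add_one_eq_sum_even (f := fun i => iteratedDeriv i H 0 / i ! *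
          (iteratedDeriv (2 * n - i) U 0 / (2 * n - i)!))
          (fun k => by simp only [hH_odd, zero_div, zero_mul]) n).symm
    _ = iteratedDeriv (2 * n) (fun x => H x * U x) 0 / (2 * n)! :=
        (iteratedDeriv_fun_mul_div_factorial (by fun_prop) (by fun_prop)).symm
    _ = 0 := by rw [iteratedDeriv_cosh_pow_mul_xDivSinh_pow_zero hqn, zero_div]
end

section
/- For natural numbers q, n with 0 < 2q < n, the convergent integral ∫₀^∞ sinh^{2q}(z)/(z · cosh^n(z)) dz equals -2q ∫₀^∞ ln(z) · sinh^{2q-1}(z)/cosh^{n-1}(z) dz + n ∫₀^∞ ln(z) · sinh^{2q+1}(z)/cosh^{n+1}(z) dz. -/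
/-!
Integrate by parts with `u = log z` and `v = sinh z ^ 2q / cosh z ^ n`, whose derivative is
`2q sinh^(2q-1)/cosh^(n-1) - n sinh^(2q+1)/cosh^(n+1)`. Everything is controlled by the bound
`sinh^m/cosh^k ≤ tanh z / cosh z` for `1 ≤ m < k`: since `tanh z ≤ min z 1`, it makes the
boundary term `log z · v` vanish at `0⁺` (like `z log z`) and at `∞`, and it dominates all
integrands by `(1 + z) / cosh z ≤ 4 e^(-z/2)`.
-/

open Real MeasureTheory Set Filter Topology

namespace Real

theorem hasDerivAt_sinh_pow_div_cosh_pow (m : ℕ) {k : ℕ} (hk : k ≠ 0) (z : ℝ) :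
    HasDerivAt (fun z => sinh z ^ m / cosh z ^ k)
      (m * (sinh z ^ (m - 1) / cosh z ^ (k - 1))
        - k * (sinh z ^ (m + 1) / cosh z ^ (k + 1))) z := by
  have hc : cosh z ≠ 0 := (cosh_pos z).ne'
  refine (((hasDerivAt_sinh z).fun_pow m).div ((hasDerivAt_cosh z).fun_pow k)
    (pow_ne_zero k hc)).congr_deriv ?_
  obtain ⟨l, rfl⟩ : ∃ l, k = l + 1 := ⟨k - 1, by omega⟩
  -- for `m = 0` the truncated exponent `m - 1` is harmless: its coefficient is `0`
  rcases m with _ | m <;>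
    simp only [Nat.cast_zero, Nat.cast_add, Nat.cast_one, add_tsub_cancel_right, zero_mul,
      zero_sub] <;>
    field_simp <;> ring

theorem sinh_le_mul_cosh {z : ℝ} (hz : 0 ≤ z) : sinh z ≤ z * cosh z := by
  have hderiv (x : ℝ) : HasDerivAt (fun t => t * cosh t - sinh t) (x * sinh x) x := by
    simpa using ((hasDerivAt_id' x).fun_mul (hasDerivAt_cosh x)).fun_sub (hasDerivAt_sinh x)
  have hmono : MonotoneOn (fun t => t * cosh t - sinh t) (Ici 0) :=
    monotoneOn_of_hasDerivWithinAt_nonneg (convex_Ici 0) (by fun_prop)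
      (fun x _ => (hderiv x).hasDerivWithinAt)
      (fun x hx => by
        rw [interior_Ici] at hx
        exact mul_nonneg hx.le (sinh_nonneg_iff.2 hx.le))
  simpa using hmono self_mem_Ici hz hz

theorem tanh_le_self {z : ℝ} (hz : 0 ≤ z) : tanh z ≤ z := by
  rw [tanh_eq_sinh_div_cosh, div_le_iff₀ (cosh_pos z)]
  exact sinh_le_mul_cosh hz

theorem tanh_nonneg {z : ℝ} (hz : 0 ≤ z) : 0 ≤ tanh z := by
  rw [tanh_eq_sinh_div_cosh]
  exact div_nonneg (sinh_nonneg_iff.2 hz) (cosh_pos z).le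

theorem sinh_pow_div_cosh_pow_le_inv_cosh {j l : ℕ} (hjl : j < l) {z : ℝ} (hz : 0 ≤ z) :
    sinh z ^ j / cosh z ^ l ≤ (cosh z)⁻¹ := by
  obtain ⟨i, rfl⟩ : ∃ i, l = j + i + 1 := ⟨l - j - 1, by omega⟩
  have hc := cosh_pos z
  have hs := sinh_nonneg_iff.2 hz
  calc sinh z ^ j / cosh z ^ (j + i + 1) ≤ cosh z ^ j / cosh z ^ (j + i + 1) := by
        gcongr; exact (sinh_lt_cosh z).le
    _ = (cosh z ^ i)⁻¹ * (cosh z)⁻¹ := by field_simp; ring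
    _ ≤ (cosh z)⁻¹ :=
        mul_le_of_le_one_left (inv_nonneg.2 hc.le)
          (inv_le_one_of_one_le₀ (one_le_pow₀ (one_le_cosh z)))

theorem sinh_pow_div_cosh_pow_le_tanh_mul_inv_cosh {m k : ℕ} (hm : m ≠ 0) (hmk : m < k)
    {z : ℝ} (hz : 0 ≤ z) : sinh z ^ m / cosh z ^ k ≤ tanh z * (cosh z)⁻¹ := by
  obtain ⟨j, rfl⟩ := Nat.exists_eq_succ_of_ne_zero hm
  obtain ⟨l, rfl⟩ : ∃ l, k = l + 1 := ⟨k - 1, by omega⟩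
  have hsplit : sinh z ^ (j + 1) / cosh z ^ (l + 1) = tanh z * (sinh z ^ j / cosh z ^ l) := by
    rw [tanh_eq_sinh_div_cosh]; ring
  rw [hsplit]
  gcongr
  · exact tanh_nonneg hz
  · exact sinh_pow_div_cosh_pow_le_inv_cosh (by omega) hz

theorem abs_log_mul_tanh_le {z : ℝ} (hz : 0 < z) : |log z| * tanh z ≤ 1 + z := by
  rcases le_or_gt z 1 with hz1 | hz1
  · calc |log z| * tanh z ≤ |log z| * z := by gcongr; exact tanh_le_self hz.le
      _ = |log z * z| := by rw [abs_mul, abs_of_pos hz]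
      _ ≤ 1 + z := by linarith [abs_log_mul_self_lt z hz hz1]
  · calc |log z| * tanh z ≤ |log z| * 1 := by gcongr; exact (tanh_lt_one z).le
      _ ≤ 1 + z := by
        rw [mul_one, abs_of_pos (log_pos hz1)]
        linarith [log_le_sub_one_of_pos hz]

theorem one_add_mul_inv_cosh_le (z : ℝ) :
    (1 + z) * (cosh z)⁻¹ ≤ 4 * exp (-(1 / 2) * z) := by
  rw [← div_eq_mul_inv, div_le_iff₀ (cosh_pos z), cosh_eq]
  -- `1 + z ≤ 2 e^(z/2)` and `cosh z ≥ e^z / 2`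
  have hexp : exp (-(1 / 2) * z) * exp z = exp (z / 2) := by rw [← exp_add]; ring_nf
  nlinarith [add_one_le_exp (z / 2), exp_pos (-(1 / 2) * z), exp_pos (-z)]

theorem integrableOn_one_add_mul_inv_cosh :
    IntegrableOn (fun z => (1 + z) * (cosh z)⁻¹) (Ioi 0) :=
  ((exp_neg_integrableOn_Ioi 0 (by norm_num : (0 : ℝ) < 1 / 2)).const_mul 4).mono'
    (by fun_prop) (ae_restrict_of_forall_mem measurableSet_Ioi fun z (hz : 0 < z) => by
      have := cosh_pos z
      rw [norm_of_nonneg (by positivity)]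
      exact one_add_mul_inv_cosh_le z)

theorem tendsto_one_add_mul_inv_cosh_atTop :
    Tendsto (fun z => (1 + z) * (cosh z)⁻¹) atTop (𝓝 0) := by
  have hexp : Tendsto (fun z : ℝ => 4 * exp (-(1 / 2) * z)) atTop (𝓝 0) := by
    simpa using (tendsto_exp_atBot.comp
      (tendsto_id.const_mul_atTop_of_neg (by norm_num : -(1 / 2 : ℝ) < 0))).const_mul 4
  refine squeeze_zero' ?_ (Eventually.of_forall one_add_mul_inv_cosh_le) hexp
  filter_upwards [eventually_ge_atTop 0] with z hz
  have := cosh_pos z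
  positivity

variable {m k : ℕ}

theorem abs_log_mul_sinh_pow_div_cosh_pow_le (hm : m ≠ 0) (hmk : m < k) {z : ℝ} (hz : 0 < z) :
    |log z * sinh z ^ m / cosh z ^ k| ≤ |log z| * tanh z * (cosh z)⁻¹ := by
  have hratio : 0 ≤ sinh z ^ m / cosh z ^ k :=
    div_nonneg (pow_nonneg (sinh_nonneg_iff.2 hz.le) m) (pow_nonneg (cosh_pos z).le k)
  rw [mul_div_assoc, abs_mul, abs_of_nonneg hratio, mul_assoc]
  gcongr
  exact sinh_pow_div_cosh_pow_le_tanh_mul_inv_cosh hm hmk hz.le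

theorem abs_log_mul_sinh_pow_div_cosh_pow_le_one_add_mul_inv_cosh (hm : m ≠ 0) (hmk : m < k)
    {z : ℝ} (hz : 0 < z) :
    |log z * sinh z ^ m / cosh z ^ k| ≤ (1 + z) * (cosh z)⁻¹ :=
  (abs_log_mul_sinh_pow_div_cosh_pow_le hm hmk hz).trans <|
    mul_le_mul_of_nonneg_right (abs_log_mul_tanh_le hz) (inv_nonneg.2 (cosh_pos z).le)

theorem integrableOn_log_mul_sinh_pow_div_cosh_pow (hm : m ≠ 0) (hmk : m < k) :
    IntegrableOn (fun z => log z * sinh z ^ m / cosh z ^ k) (Ioi 0) :=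
  integrableOn_one_add_mul_inv_cosh.mono' (by fun_prop : Measurable _).aestronglyMeasurable
    (ae_restrict_of_forall_mem measurableSet_Ioi fun _ hz =>
      abs_log_mul_sinh_pow_div_cosh_pow_le_one_add_mul_inv_cosh hm hmk hz)

theorem integrableOn_sinh_pow_div_mul_cosh_pow (hm : m ≠ 0) (hmk : m < k) :
    IntegrableOn (fun z => sinh z ^ m / (z * cosh z ^ k)) (Ioi 0) := by
  refine integrableOn_one_add_mul_inv_cosh.mono' (by fun_prop : Measurable _).aestronglyMeasurable
    (ae_restrict_of_forall_mem measurableSet_Ioi fun z (hz : 0 < z) => ?_)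
  have hc := cosh_pos z
  have hs := sinh_nonneg_iff.2 hz.le
  rw [norm_of_nonneg (div_nonneg (pow_nonneg hs m) (by positivity))]
  calc sinh z ^ m / (z * cosh z ^ k) = z⁻¹ * (sinh z ^ m / cosh z ^ k) := by ring
    _ ≤ z⁻¹ * (tanh z * (cosh z)⁻¹) := by
        gcongr; exact sinh_pow_div_cosh_pow_le_tanh_mul_inv_cosh hm hmk hz.le
    _ ≤ z⁻¹ * (z * (cosh z)⁻¹) := by gcongr; exact tanh_le_self hz.le
    _ = (cosh z)⁻¹ := by field_simp
    _ ≤ (1 + z) * (cosh z)⁻¹ := le_mul_of_one_le_left (inv_nonneg.2 hc.le) (by linarith)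

theorem tendsto_log_mul_sinh_pow_div_cosh_pow_atTop (hm : m ≠ 0) (hmk : m < k) :
    Tendsto (fun z => log z * sinh z ^ m / cosh z ^ k) atTop (𝓝 0) :=
  squeeze_zero_norm' ((eventually_gt_atTop 0).mono fun _ hz =>
    abs_log_mul_sinh_pow_div_cosh_pow_le_one_add_mul_inv_cosh hm hmk hz)
    tendsto_one_add_mul_inv_cosh_atTop

theorem tendsto_log_mul_sinh_pow_div_cosh_pow_nhdsGT_zero (hm : m ≠ 0) (hmk : m < k) :
    Tendsto (fun z => log z * sinh z ^ m / cosh z ^ k) (𝓝[>] 0) (𝓝 0) := by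
  have hlog : Tendsto (fun z => log z * z) (𝓝[>] 0) (𝓝 0) := by
    simpa using tendsto_log_mul_rpow_nhdsGT_zero one_pos
  refine squeeze_zero_norm' ?_ (by simpa only [norm_zero] using hlog.norm)
  filter_upwards [self_mem_nhdsWithin] with z (hz : 0 < z)
  have hc := cosh_pos z
  calc ‖log z * sinh z ^ m / cosh z ^ k‖ ≤ |log z| * tanh z * (cosh z)⁻¹ :=
        abs_log_mul_sinh_pow_div_cosh_pow_le hm hmk hz
    _ ≤ |log z| * z * 1 := by
        gcongr
        · exact tanh_le_self hz.le
        · exact inv_le_one_of_one_le₀ (one_le_cosh z)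
    _ = ‖log z * z‖ := by rw [mul_one, norm_mul, norm_of_nonneg hz.le, norm_eq_abs]

theorem integral_sinh_pow_div_mul_cosh_pow (hm : 2 ≤ m) (hmk : m < k) :
    ∫ z in Ioi 0, sinh z ^ m / (z * cosh z ^ k) =
      -(m : ℝ) * (∫ z in Ioi 0, log z * sinh z ^ (m - 1) / cosh z ^ (k - 1))
        + k * ∫ z in Ioi 0, log z * sinh z ^ (m + 1) / cosh z ^ (k + 1) := by
  have hlow := (integrableOn_log_mul_sinh_pow_div_cosh_pow (m := m - 1) (k := k - 1)
    (by omega) (by omega)).const_mul (m : ℝ)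
  have hhigh := (integrableOn_log_mul_sinh_pow_div_cosh_pow (m := m + 1) (k := k + 1)
    (by omega) (by omega)).const_mul (k : ℝ)
  have hparts := integral_Ioi_mul_deriv_eq_deriv_mul (u := log) (u' := fun z => z⁻¹)
    (v := fun z => sinh z ^ m / cosh z ^ k)
    (fun z hz => hasDerivAt_log (ne_of_gt hz))
    (fun z _ => hasDerivAt_sinh_pow_div_cosh_pow m (by omega) z)
    (IntegrableOn.congr_fun (hlow.sub hhigh)
      (fun z _ => by simp only [Pi.mul_apply, Pi.sub_apply]; ring) measurableSet_Ioi)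
    ((integrableOn_sinh_pow_div_mul_cosh_pow (by omega) hmk).congr_fun
      (fun z _ => by simp only [Pi.mul_apply]; ring) measurableSet_Ioi)
    ((tendsto_log_mul_sinh_pow_div_cosh_pow_nhdsGT_zero (by omega) hmk).congr
      fun z => mul_div_assoc _ _ _)
    ((tendsto_log_mul_sinh_pow_div_cosh_pow_atTop (by omega) hmk).congr
      fun z => mul_div_assoc _ _ _)
  have hlhs : ∫ z in Ioi 0, log z * (m * (sinh z ^ (m - 1) / cosh z ^ (k - 1))
        - k * (sinh z ^ (m + 1) / cosh z ^ (k + 1))) =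
      m * (∫ z in Ioi 0, log z * sinh z ^ (m - 1) / cosh z ^ (k - 1))
        - k * ∫ z in Ioi 0, log z * sinh z ^ (m + 1) / cosh z ^ (k + 1) := by
    rw [← integral_const_mul, ← integral_const_mul, ← integral_sub hlow hhigh]
    exact setIntegral_congr_fun measurableSet_Ioi fun z _ => by ring
  have hrhs : ∫ z in Ioi 0, z⁻¹ * (sinh z ^ m / cosh z ^ k) =
      ∫ z in Ioi 0, sinh z ^ m / (z * cosh z ^ k) :=
    setIntegral_congr_fun measurableSet_Ioi fun z _ => by ring
  linarith

end Real

theorem stmt_18 (q n : ℕ) (hq : 0 < 2 * q) (hn : 2 * q < n) :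
    (∫ z in Set.Ioi (0 : ℝ), Real.sinh z ^ (2 * q) / (z * Real.cosh z ^ n))
      = -(2 * q : ℝ) *
          (∫ z in Set.Ioi (0 : ℝ), Real.log z * Real.sinh z ^ (2 * q - 1) / Real.cosh z ^ (n - 1))
        + (n : ℝ) *
          (∫ z in Set.Ioi (0 : ℝ), Real.log z * Real.sinh z ^ (2 * q + 1) / Real.cosh z ^ (n + 1)) := by
  have h := integral_sinh_pow_div_mul_cosh_pow (m := 2 * q) (k := n) (by omega) hn
  push_cast at h
  exact h
end
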